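/- Density of the domain in the intermediate spaces: for every 1 ≤ q < ∞ and θ ∈ (0,1), the domain D(A) is dense in D_A(θ,q) (with respect to its norm) and dense in the real interpolation space (X, D(Ȧ))_{θ,q}. -/

import Mathlib

open MeasureTheory Filter Topology Set
open scoped ENNReal NNReal

attribute [local instance] Classical.propDecidable

noncomputable section

/-- The measure `dt/t` on `(0,∞)`, used for the `L_{q,*}` spaces. -/
def haarScale : MeasureTheory.Measure ℝ :=
  (MeasureTheory.volume.restrict (Set.Ioi (0:ℝ))).withDensity fun t => ENNReal.ofReal t⁻¹

/-- The `L_q` norm of an `ℝ≥0∞`-valued quantity with respect to a measure on `ℝ`. -/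
def lqNorm (q : ℝ≥0∞) (μ : MeasureTheory.Measure ℝ) (F : ℝ → ℝ≥0∞) : ℝ≥0∞ :=
  if q = ⊤ then essSup F μ else (∫⁻ t, F t ^ q.toReal ∂μ) ^ (1 / q.toReal)

/-- The time interval `(0, T)` for `T ∈ (0,∞]`. -/
def timeInterval (T : ℝ≥0∞) : Set ℝ := {t : ℝ | 0 < t ∧ ENNReal.ofReal t < T}

/-- The abstract setting of the homogeneous Da Prato–Grisvard theory: `X` is a complex
Banach space, `A : D(A) ⊆ X → X` is a closed, densely defined, injective linear operator
such that `−A` generates a bounded strongly continuous analytic semigroup `(e^{−tA})_{t≥0}`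
(encoded by the field `S` together with the bounds `S_bdd` and `S_analytic` and the
generator identities `gen_eq` and `gen_eq_dom`); `Y` is a normed space, compatible with `X`
inside an ambient Hausdorff topological vector space `Z`, with `D(A) ⊆ Y` and
`C₁‖Ax‖ ≤ ‖x‖_Y ≤ C₂‖Ax‖` on `D(A)`; moreover `D(Ȧ) ∩ X = D(A)` (field `inter_sub`). -/
structure DPG (X Y Z : Type*) [NormedAddCommGroup X] [NormedSpace ℂ X] [CompleteSpace X]
    [NormedAddCommGroup Y] [NormedSpace ℂ Y]
    [AddCommGroup Z] [Module ℂ Z] [TopologicalSpace Z] [T2Space Z] : Type _ where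
  ιX : X →ₗ[ℂ] Z
  ιY : Y →ₗ[ℂ] Z
  ιX_inj : Function.Injective ιX
  ιY_inj : Function.Injective ιY
  dom : Submodule ℂ X
  dom_dense : Dense (dom : Set X)
  Aop : dom →ₗ[ℂ] X
  A_closed : IsClosed {p : X × X | ∃ x : dom, (x : X) = p.1 ∧ Aop x = p.2}
  A_inj : ∀ x : dom, Aop x = 0 → (x : X) = 0
  jY : dom →ₗ[ℂ] Y
  j_compat : ∀ x : dom, ιX (x : X) = ιY (jY x)
  C₁ : ℝ
  C₂ : ℝ
  C₁_pos : 0 < C₁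
  C₂_pos : 0 < C₂
  normY_lower : ∀ x : dom, C₁ * ‖Aop x‖ ≤ ‖jY x‖
  normY_upper : ∀ x : dom, ‖jY x‖ ≤ C₂ * ‖Aop x‖
  S : ℝ → X →L[ℂ] X
  S_zero : S 0 = 1
  S_add : ∀ s t : ℝ, 0 ≤ s → 0 ≤ t → S (s + t) = (S s).comp (S t)
  S_strong_cont : ∀ x : X, ContinuousOn (fun t => S t x) (Set.Ici (0:ℝ))
  M₀ : ℝ
  S_bdd : ∀ t : ℝ, 0 ≤ t → ‖S t‖ ≤ M₀
  S_smoothing : ∀ (t : ℝ), 0 < t → ∀ x : X, S t x ∈ dom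
  M : ℝ
  S_analytic : ∀ (t : ℝ) (ht : 0 < t) (x : X),
    t * ‖Aop ⟨S t x, S_smoothing t ht x⟩‖ ≤ M * ‖x‖
  int_mem : ∀ (x : X) (t : ℝ), (∫ s in Set.Ioc (0:ℝ) t, S s x) ∈ dom
  gen_eq : ∀ (x : X) (t : ℝ), 0 ≤ t →
    Aop ⟨∫ s in Set.Ioc (0:ℝ) t, S s x, int_mem x t⟩ = x - S t x
  gen_eq_dom : ∀ (x : dom) (t : ℝ), 0 ≤ t →
    S t (x : X) - (x : X) = - ∫ s in Set.Ioc (0:ℝ) t, S s (Aop x)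
  inter_sub : ∀ (x : X) (y : Y),
    (∃ u : ℕ → dom, Filter.Tendsto (fun n => jY (u n)) Filter.atTop (nhds y)) →
    ιX x = ιY y → x ∈ dom

namespace DPG

variable {X Y Z : Type*} [NormedAddCommGroup X] [NormedSpace ℂ X] [CompleteSpace X]
  [NormedAddCommGroup Y] [NormedSpace ℂ Y]
  [AddCommGroup Z] [Module ℂ Z] [TopologicalSpace Z] [T2Space Z]
  (E : DPG X Y Z)

/-- `A` as an everywhere-defined function on `X` (junk value `0` off the domain). -/
def Afun (x : X) : X := if h : x ∈ E.dom then E.Aop ⟨x, h⟩ else 0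

/-- The domain `D(Ȧ) ⊆ Y` of the homogeneous operator: limits in `Y` of sequences in `D(A)`. -/
def DdotA : Set Y :=
  {y : Y | ∃ u : ℕ → E.dom, Filter.Tendsto (fun n => E.jY (u n)) Filter.atTop (nhds y)}

/-- The homogeneous operator `Ȧ : D(Ȧ) → X`, `Ȧ y = lim_k A x_k` for `x_k → y` in `Y`. -/
def Adot (y : Y) : X :=
  @Classical.epsilon X ⟨0⟩ fun L =>
    ∃ u : ℕ → E.dom, Filter.Tendsto (fun n => E.jY (u n)) Filter.atTop (nhds y) ∧
      Filter.Tendsto (fun n => E.Aop (u n)) Filter.atTop (nhds L)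

/-- The sum space `X + D(Ȧ)`, realized inside the ambient space `Z`. -/
def sumSpace : Set Z :=
  {z : Z | ∃ (x : X) (y : Y), y ∈ E.DdotA ∧ z = E.ιX x + E.ιY y}

/-- A choice of the `X`-component of an element of `X + D(Ȧ)`. -/
def decompX (z : Z) : X :=
  if h : ∃ (x : X) (y : Y), y ∈ E.DdotA ∧ z = E.ιX x + E.ιY y then h.choose else 0

/-- A choice of the `D(Ȧ)`-component of an element of `X + D(Ȧ)`. -/
def decompY (z : Z) : Y :=
  if h : ∃ (x : X) (y : Y), y ∈ E.DdotA ∧ z = E.ιX x + E.ιY y then h.choose_spec.choose else 0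

/-- `Ȧ` acting on elements of `Z` lying in (the image of) `D(Ȧ)`. -/
def AdotZ (z : Z) : X :=
  if h : ∃ y : Y, y ∈ E.DdotA ∧ E.ιY y = z then E.Adot h.choose else 0

/-- The extension of the semigroup to the sum space:
`e^{−tA}(x+y) = e^{−tA}x + y − ∫₀ᵗ e^{−sA}Ȧy ds`. -/
def SGext (t : ℝ) (z : Z) : Z :=
  E.ιX (E.S t (E.decompX z) - ∫ s in Set.Ioc (0:ℝ) t, E.S s (E.Adot (E.decompY z)))
    + E.ιY (E.decompY z)

/-- `Ȧ e^{−tA} z` for `z ∈ X + D(Ȧ)`. -/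
def AdotSG (z : Z) (t : ℝ) : X := E.AdotZ (E.SGext t z)

/-- The homogeneous Da Prato–Grisvard norm `‖z‖_{Ḋ_A(θ,q)}` on the sum space. -/
def homNorm (θ : ℝ) (q : ℝ≥0∞) (z : Z) : ℝ≥0∞ :=
  MeasureTheory.eLpNorm (fun t : ℝ => t ^ (1 - θ) • E.AdotSG z t) q haarScale

/-- The homogeneous Da Prato–Grisvard norm of an element of `X`
(for which `Ȧe^{−tA}x = Ae^{−tA}x`). -/
def homNormX (θ : ℝ) (q : ℝ≥0∞) (x : X) : ℝ≥0∞ :=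
  MeasureTheory.eLpNorm (fun t : ℝ => t ^ (1 - θ) • E.Afun (E.S t x)) q haarScale

/-- The (inhomogeneous) norm of `D_A(θ,q)`. -/
def inhomNorm (θ : ℝ) (q : ℝ≥0∞) (x : X) : ℝ≥0∞ :=
  ENNReal.ofReal ‖x‖ + E.homNormX θ q x

/-- Membership in `D_A(θ,q)`. -/
def memDA (θ : ℝ) (q : ℝ≥0∞) (x : X) : Prop :=
  MeasureTheory.AEStronglyMeasurable (fun t : ℝ => t ^ (1 - θ) • E.Afun (E.S t x)) haarScale ∧
    E.homNormX θ q x < ⊤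

/-- Membership in `Ḋ_A(θ,q)`. -/
def memDdot (θ : ℝ) (q : ℝ≥0∞) (z : Z) : Prop :=
  z ∈ E.sumSpace ∧
    MeasureTheory.AEStronglyMeasurable (fun t : ℝ => t ^ (1 - θ) • E.AdotSG z t) haarScale ∧
    E.homNorm θ q z < ⊤

/-- The `K`-functional of the interpolation couple `(X, D(Ȧ))`. -/
def Kfun (t : ℝ) (z : Z) : ℝ≥0∞ :=
  ⨅ (x : X) (y : Y) (_ : y ∈ E.DdotA) (_ : E.ιX x + E.ιY y = z),
    ENNReal.ofReal (‖x‖ + t * ‖E.Adot y‖)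

/-- The real interpolation norm of `(X, D(Ȧ))_{θ,q}`. -/
def interpNorm (θ : ℝ) (q : ℝ≥0∞) (z : Z) : ℝ≥0∞ :=
  lqNorm q haarScale fun t => ENNReal.ofReal (t ^ (-θ)) * E.Kfun t z

end DPG

/-!
For `x ∈ D_A(θ,q)` the approximants are `e^{-tA}x ∈ D(A)`, `t → 0⁺`. Since `A` commutes with the
semigroup, `s^{1-θ} A e^{-sA}(x - e^{-tA}x) = (1 - e^{-tA}) s^{1-θ} A e^{-sA}x`, which tends to `0`
for every `s` and is dominated by `(1 + M₀) ‖s^{1-θ} A e^{-sA}x‖`; dominated convergence applies.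

For `z ∈ (X, D(Ȧ))_{θ,q}`, finiteness of `∫ (r^{-θ} K(r,z))^q dr/r` over sets of infinite
`dr/r`-measure gives arbitrarily small scales `s` and arbitrarily large scales `t` with
`K(s,z) < η s^θ` and `K(t,z) < η t^θ`. The corresponding decompositions `z = x_s + y_s = x_t + y_t`
give `w = x_t - x_s = y_s - y_t ∈ X ∩ D(Ȧ) = D(A)` and `z - w = x_s + y_t`. Comparing
`K(r, z - w)` with `K(r, z) + r ‖Aw‖` for `r ≤ s`, with `‖x_s‖ + r ‖Ȧy_t‖` for `s < r ≤ t`, and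
with `K(r, z) + ‖w‖` for `r > t`, the function `r^{-θ} K(r, z - w)` is bounded by the tails of
`r^{-θ} K(r, z)` outside `(s, t]` plus `η` times two power peaks centred at `s` and `t`. The peaks
have an `L_{q,*}` norm independent of their centre, so Minkowski's inequality makes the
interpolation norm of `z - w` small.
-/

section DominatedConvergence

variable {α ι ε ε' : Type*} {m : MeasurableSpace α} {μ : Measure α} {q : ℝ≥0∞}
  [TopologicalSpace ε] [ContinuousENorm ε] [TopologicalSpace ε'] [ContinuousENorm ε']

theorem tendsto_eLpNorm_of_dominated {l : Filter ι} [l.IsCountablyGenerated]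
    {F : ι → α → ε} {g : α → ε'} (hq : q ≠ ⊤) (hg : MemLp g q μ)
    (hF : ∀ᶠ i in l, AEStronglyMeasurable (F i) μ)
    (h_bound : ∀ᶠ i in l, ∀ᵐ x ∂μ, ‖F i x‖ₑ ≤ ‖g x‖ₑ)
    (h_lim : ∀ᵐ x ∂μ, Tendsto (fun i => ‖F i x‖ₑ) l (𝓝 0)) :
    Tendsto (fun i => eLpNorm (F i) q μ) l (𝓝 0) := by
  rcases eq_or_ne q 0 with rfl | hq0
  · simpa using tendsto_const_nhds
  have hp : 0 < q.toReal := ENNReal.toReal_pos hq0 hq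
  simp only [eLpNorm_eq_lintegral_rpow_enorm_toReal hq0 hq]
  have h_int : Tendsto (fun i => ∫⁻ x, ‖F i x‖ₑ ^ q.toReal ∂μ) l (𝓝 (∫⁻ _, 0 ∂μ)) := by
    refine tendsto_lintegral_filter_of_dominated_convergence' (fun x => ‖g x‖ₑ ^ q.toReal)
      (hF.mono fun i hi => hi.enorm.pow_const _) (h_bound.mono fun i hi => ?_)
      (lintegral_rpow_enorm_lt_top_of_eLpNorm_lt_top hq0 hq hg.2).ne ?_
    · filter_upwards [hi] with x hx using ENNReal.rpow_le_rpow hx hp.le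
    · filter_upwards [h_lim] with x hx
      have := (ENNReal.continuous_rpow_const (y := q.toReal)).tendsto 0 |>.comp hx
      rwa [ENNReal.zero_rpow_of_pos hp] at this
  have := (ENNReal.continuous_rpow_const (y := 1 / q.toReal)).tendsto 0 |>.comp
    (by simpa using h_int)
  rwa [ENNReal.zero_rpow_of_pos (one_div_pos.2 hp)] at this

theorem MeasureTheory.MemLp.exists_enorm_lt_of_measure_eq_top {f : α → ε} (hf : MemLp f q μ)
    (hq0 : q ≠ 0) (hq : q ≠ ⊤) {A : Set α} (hAμ : μ A = ⊤) {c : ℝ≥0∞} (hc : c ≠ 0) :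
    ∃ x ∈ A, ‖f x‖ₑ < c := by
  by_contra! h
  have hsub : A ⊆ {x | c ≤ ‖f x‖ₑ} := h
  have := mul_meas_ge_le_pow_eLpNorm' μ hq0 hq hf.1 c
  rw [measure_mono_top hsub hAμ, ENNReal.mul_top (by positivity)] at this
  exact (ENNReal.rpow_lt_top_of_nonneg ENNReal.toReal_nonneg hf.2.ne).ne (top_le_iff.1 this)

end DominatedConvergence

section Tails

variable {ε : Type*} [TopologicalSpace ε] [ESeminormedAddMonoid ε] {μ : Measure ℝ} {q : ℝ≥0∞}
  {f : ℝ → ε}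

theorem tendsto_eLpNorm_indicator_Ioc_nhdsGT (hq : q ≠ ⊤) (hf : MemLp f q μ) :
    Tendsto (fun c => eLpNorm ((Ioc 0 c).indicator f) q μ) (𝓝[>] 0) (𝓝 0) := by
  refine tendsto_eLpNorm_of_dominated hq hf
    (.of_forall fun c => hf.1.indicator measurableSet_Ioc)
    (.of_forall fun c => .of_forall fun r => enorm_indicator_le_enorm_self f r)
    (.of_forall fun r => tendsto_const_nhds.congr' ?_)
  have hr : ∀ᶠ c in 𝓝[>] (0 : ℝ), r ∉ Ioc 0 c := by
    by_cases hr : 0 < r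
    · filter_upwards [nhdsWithin_le_nhds (Iio_mem_nhds hr)] with c hc h using hc.not_ge h.2
    · exact .of_forall fun c h => hr h.1
  filter_upwards [hr] with c hc
  rw [indicator_of_notMem hc, enorm_zero]

theorem tendsto_eLpNorm_indicator_Ioi_atTop (hq : q ≠ ⊤) (hf : MemLp f q μ) :
    Tendsto (fun c => eLpNorm ((Ioi c).indicator f) q μ) atTop (𝓝 0) := by
  refine tendsto_eLpNorm_of_dominated hq hf
    (.of_forall fun c => hf.1.indicator measurableSet_Ioi)
    (.of_forall fun c => .of_forall fun r => enorm_indicator_le_enorm_self f r)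
    (.of_forall fun r => tendsto_const_nhds.congr' ?_)
  filter_upwards [eventually_ge_atTop r] with c hc
  rw [indicator_of_notMem (notMem_Ioi.2 hc), enorm_zero]

end Tails

section HaarScale

theorem ae_pos_haarScale : ∀ᵐ t ∂haarScale, 0 < t :=
  (withDensity_absolutelyContinuous _ _).ae_le (ae_restrict_mem measurableSet_Ioi)

theorem setLIntegral_haarScale {A : Set ℝ} (hA : MeasurableSet A) (hA0 : A ⊆ Ioi 0)
    {f : ℝ → ℝ≥0∞} (hf : Measurable f) :
    ∫⁻ r in A, f r ∂haarScale = ∫⁻ r in A, ENNReal.ofReal r⁻¹ * f r := by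
  rw [haarScale, restrict_withDensity hA,
    lintegral_withDensity_eq_lintegral_mul _ (by fun_prop) hf,
    Measure.restrict_restrict hA, inter_eq_self_of_subset_left hA0]
  rfl

theorem haarScale_eq_top_of_not_integrableOn {A : Set ℝ} (hA : MeasurableSet A)
    (hA0 : A ⊆ Ioi 0) (h : ¬ IntegrableOn (·⁻¹) A) : haarScale A = ⊤ := by
  have hint := setLIntegral_haarScale hA hA0 (f := 1) measurable_const
  simp only [Pi.one_apply, mul_one, setLIntegral_one] at hint
  rw [hint]
  by_contra hfin
  refine h ((lintegral_ofReal_ne_top_iff_integrable (by fun_prop) ?_).1 hfin)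
  filter_upwards [ae_restrict_mem hA] with r hr using inv_nonneg.2 (hA0 hr).le

theorem haarScale_Ioc_eq_top {c : ℝ} (hc : 0 < c) : haarScale (Ioc 0 c) = ⊤ := by
  refine haarScale_eq_top_of_not_integrableOn measurableSet_Ioc (fun _ hr => hr.1) ?_
  rw [← intervalIntegrable_iff_integrableOn_Ioc_of_le hc.le, intervalIntegrable_inv_iff]
  simp [hc.ne, hc.le]

theorem haarScale_Ioi_eq_top {c : ℝ} (hc : 0 < c) : haarScale (Ioi c) = ⊤ :=
  haarScale_eq_top_of_not_integrableOn measurableSet_Ioi (Ioi_subset_Ioi hc.le)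
    not_integrableOn_Ioi_inv

theorem lintegral_haarScale_Ioc_div_rpow {k c : ℝ} (hk : 0 < k) (hc : 0 < c) :
    ∫⁻ r in Ioc 0 c, ENNReal.ofReal ((r / c) ^ k) ∂haarScale = ENNReal.ofReal (1 / k) := by
  have hint : IntegrableOn (fun r : ℝ => c ^ (-k) * r ^ (k - 1)) (Ioc 0 c) := by
    refine Integrable.const_mul ?_ _
    exact (intervalIntegrable_iff_integrableOn_Ioc_of_le hc.le).1
      (intervalIntegral.intervalIntegrable_rpow' (by linarith))
  have hpos : 0 ≤ᵐ[volume.restrict (Ioc 0 c)] fun r : ℝ => c ^ (-k) * r ^ (k - 1) := by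
    filter_upwards [ae_restrict_mem measurableSet_Ioc] with r hr
    have := hr.1
    positivity
  have heq : ∀ r ∈ Ioc (0 : ℝ) c, ENNReal.ofReal r⁻¹ * ENNReal.ofReal ((r / c) ^ k)
      = ENNReal.ofReal (c ^ (-k) * r ^ (k - 1)) := fun r hr => by
    rw [← ENNReal.ofReal_mul (inv_nonneg.2 hr.1.le), Real.div_rpow hr.1.le hc.le,
      Real.rpow_sub_one hr.1.ne', Real.rpow_neg hc.le]
    ring_nf
  rw [setLIntegral_haarScale measurableSet_Ioc (fun _ hr => hr.1) (by fun_prop),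
    setLIntegral_congr_fun measurableSet_Ioc heq, ← ofReal_integral_eq_lintegral_ofReal hint hpos,
    ← intervalIntegral.integral_of_le hc.le, intervalIntegral.integral_const_mul,
    integral_rpow (Or.inl (by linarith)), sub_add_cancel, Real.zero_rpow hk.ne', sub_zero,
    Real.rpow_neg hc.le]
  have : 0 < c ^ k := by positivity
  field_simp

theorem lintegral_haarScale_Ioi_div_rpow {k c : ℝ} (hk : 0 < k) (hc : 0 < c) :
    ∫⁻ r in Ioi c, ENNReal.ofReal ((c / r) ^ k) ∂haarScale = ENNReal.ofReal (1 / k) := by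
  have hint : IntegrableOn (fun r : ℝ => c ^ k * r ^ (-k - 1)) (Ioi c) :=
    (integrableOn_Ioi_rpow_of_lt (by linarith) hc).const_mul _
  have hpos : 0 ≤ᵐ[volume.restrict (Ioi c)] fun r : ℝ => c ^ k * r ^ (-k - 1) := by
    filter_upwards [ae_restrict_mem measurableSet_Ioi] with r hr
    have : 0 < r := hc.trans hr
    positivity
  have heq : ∀ r ∈ Ioi c, ENNReal.ofReal r⁻¹ * ENNReal.ofReal ((c / r) ^ k)
      = ENNReal.ofReal (c ^ k * r ^ (-k - 1)) := fun r hr => by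
    have hr0 : 0 < r := hc.trans hr
    rw [← ENNReal.ofReal_mul (inv_nonneg.2 hr0.le), Real.div_rpow hc.le hr0.le,
      Real.rpow_sub_one hr0.ne', Real.rpow_neg hr0.le]
    ring_nf
  rw [setLIntegral_haarScale measurableSet_Ioi (Ioi_subset_Ioi hc.le) (by fun_prop),
    setLIntegral_congr_fun measurableSet_Ioi heq, ← ofReal_integral_eq_lintegral_ofReal hint hpos,
    integral_const_mul, integral_Ioi_rpow_of_lt (by linarith) hc, sub_add_cancel,
    Real.rpow_neg hc.le]
  field_simp

end HaarScale

section PowerPeak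

def powerPeak (a b c r : ℝ) : ℝ≥0∞ :=
  ENNReal.ofReal (if r ≤ c then (r / c) ^ a else (c / r) ^ b)

variable {a b c : ℝ}

theorem measurable_powerPeak : Measurable (powerPeak a b c) :=
  ENNReal.measurable_ofReal.comp (Measurable.ite measurableSet_Iic (by fun_prop) (by fun_prop))

theorem lintegral_powerPeak_rpow (ha : 0 < a) (hb : 0 < b) (hc : 0 < c) {p : ℝ} (hp : 0 < p) :
    ∫⁻ r, powerPeak a b c r ^ p ∂haarScale
      = ENNReal.ofReal (1 / (a * p)) + ENNReal.ofReal (1 / (b * p)) := by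
  have hsplit : haarScale = haarScale.restrict (Ioc 0 c ∪ Ioi c) := by
    rw [Ioc_union_Ioi_eq_Ioi hc.le]
    exact (Measure.restrict_eq_self_of_ae_mem ae_pos_haarScale).symm
  rw [hsplit, lintegral_union measurableSet_Ioi Ioc_disjoint_Ioi_same,
    ← lintegral_haarScale_Ioc_div_rpow (mul_pos ha hp) hc,
    ← lintegral_haarScale_Ioi_div_rpow (mul_pos hb hp) hc]
  congr 1
  · refine setLIntegral_congr_fun measurableSet_Ioc fun r hr => ?_
    rw [powerPeak, if_pos hr.2, ENNReal.ofReal_rpow_of_nonneg (by have := hr.1; positivity) hp.le,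
      ← Real.rpow_mul (div_nonneg hr.1.le hc.le)]
  · refine setLIntegral_congr_fun measurableSet_Ioi fun r (hr : c < r) => ?_
    rw [powerPeak, if_neg hr.not_ge,
      ENNReal.ofReal_rpow_of_nonneg (by have := hc.trans hr; positivity) hp.le,
      ← Real.rpow_mul (div_nonneg hc.le (hc.trans hr).le)]

theorem eLpNorm_powerPeak (ha : 0 < a) (hb : 0 < b) (hc : 0 < c) {q : ℝ≥0∞} (hq0 : q ≠ 0)
    (hq : q ≠ ⊤) :
    eLpNorm (powerPeak a b c) q haarScale
      = (ENNReal.ofReal (1 / (a * q.toReal)) + ENNReal.ofReal (1 / (b * q.toReal)))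
          ^ (1 / q.toReal) := by
  simp only [eLpNorm_eq_lintegral_rpow_enorm_toReal hq0 hq, enorm_eq_self,
    lintegral_powerPeak_rpow ha hb hc (ENNReal.toReal_pos hq0 hq)]

end PowerPeak

namespace DPG

section

variable {X Y Z : Type*} [NormedAddCommGroup X] [NormedSpace ℂ X] [CompleteSpace X]
  [NormedAddCommGroup Y] [NormedSpace ℂ Y]
  [AddCommGroup Z] [Module ℂ Z] [TopologicalSpace Z] [T2Space Z]
  (E : DPG X Y Z)

section Semigroup

theorem Afun_of_mem {x : X} (hx : x ∈ E.dom) : E.Afun x = E.Aop ⟨x, hx⟩ := dif_pos hx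

theorem Afun_sub {x y : X} (hx : x ∈ E.dom) (hy : y ∈ E.dom) :
    E.Afun (x - y) = E.Afun x - E.Afun y := by
  rw [E.Afun_of_mem (sub_mem hx hy), E.Afun_of_mem hx, E.Afun_of_mem hy, ← map_sub]
  rfl

theorem S_apply_eq_sub_integral (x : E.dom) {t : ℝ} (ht : 0 ≤ t) :
    E.S t x = x - ∫ s in Ioc 0 t, E.S s (E.Aop x) := by
  rw [sub_eq_iff_eq_add.1 (E.gen_eq_dom x t ht)]
  abel

theorem S_apply_mem_dom {x : X} (hx : x ∈ E.dom) {t : ℝ} (ht : 0 ≤ t) : E.S t x ∈ E.dom := by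
  rw [E.S_apply_eq_sub_integral ⟨x, hx⟩ ht]
  exact sub_mem hx (E.int_mem _ t)

theorem Afun_S_apply {x : X} (hx : x ∈ E.dom) {t : ℝ} (ht : 0 ≤ t) :
    E.Afun (E.S t x) = E.S t (E.Afun x) := by
  have hI := E.int_mem (E.Aop ⟨x, hx⟩) t
  have hrep := E.S_apply_eq_sub_integral ⟨x, hx⟩ ht
  rw [hrep, E.Afun_sub hx hI, E.Afun_of_mem hx, E.Afun_of_mem hI, E.gen_eq _ t ht]
  abel

theorem Afun_S_sub_S (x : X) {s t : ℝ} (hs : 0 < s) (ht : 0 ≤ t) :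
    E.Afun (E.S s (x - E.S t x)) = E.Afun (E.S s x) - E.S t (E.Afun (E.S s x)) := by
  have hx := E.S_smoothing s hs x
  have hcomm : E.S s (E.S t x) = E.S t (E.S s x) := by
    rw [← ContinuousLinearMap.comp_apply, ← E.S_add s t hs.le ht, add_comm, E.S_add t s ht hs.le]
    rfl
  rw [map_sub, hcomm, E.Afun_sub hx (E.S_apply_mem_dom hx ht), E.Afun_S_apply hx ht]

theorem tendsto_S_nhdsGT (x : X) : Tendsto (fun t => E.S t x) (𝓝[>] 0) (𝓝 x) := by
  have h := E.S_strong_cont x 0 self_mem_Ici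
  rw [ContinuousWithinAt, E.S_zero] at h
  exact h.mono_left (nhdsWithin_mono _ Ioi_subset_Ici_self)

theorem norm_S_apply_le (x : X) {t : ℝ} (ht : 0 ≤ t) : ‖E.S t x‖ ≤ E.M₀ * ‖x‖ :=
  (E.S t).le_of_opNorm_le (E.S_bdd t ht) x

theorem M₀_nonneg : 0 ≤ E.M₀ := (norm_nonneg _).trans (E.S_bdd 0 le_rfl)

theorem tendsto_homNormX_sub_S {θ : ℝ} {q : ℝ≥0∞} (hq : q ≠ ⊤) {x : X} (hx : E.memDA θ q x) :
    Tendsto (fun t => E.homNormX θ q (x - E.S t x)) (𝓝[>] 0) (𝓝 0) := by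
  set H : ℝ → X := fun s => s ^ (1 - θ) • E.Afun (E.S s x)
  have hH : MemLp H q haarScale := hx
  have hsplit : ∀ᶠ t in 𝓝[>] (0 : ℝ),
      E.homNormX θ q (x - E.S t x) = eLpNorm (fun s => H s - E.S t (H s)) q haarScale := by
    filter_upwards [self_mem_nhdsWithin] with t (ht : 0 < t)
    refine eLpNorm_congr_ae ?_
    filter_upwards [ae_pos_haarScale] with s hs
    simp only [H, E.Afun_S_sub_S x hs ht.le, smul_sub, ContinuousLinearMap.map_smul_of_tower]
  refine Tendsto.congr' (EventuallyEq.symm hsplit) (tendsto_eLpNorm_of_dominated hq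
    (hH.const_smul (1 + E.M₀)) (.of_forall fun t => hH.1.sub
      ((E.S t).continuous.comp_aestronglyMeasurable hH.1)) ?_ (.of_forall fun s => ?_))
  · filter_upwards [self_mem_nhdsWithin] with t (ht : 0 < t)
    refine .of_forall fun s => enorm_le_iff_norm_le.2 ?_
    rw [Pi.smul_apply, norm_smul, Real.norm_of_nonneg (by linarith [E.M₀_nonneg])]
    linarith [norm_sub_le (H s) (E.S t (H s)), E.norm_S_apply_le (H s) ht.le]
  · have := ((tendsto_const_nhds (x := H s)).sub (E.tendsto_S_nhdsGT (H s))).enorm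
    rwa [sub_self, enorm_zero] at this

theorem exists_dom_inhomNorm_sub_lt {θ : ℝ} {q : ℝ≥0∞} (hq : q ≠ ⊤) {x : X}
    (hx : E.memDA θ q x) {ε : ℝ} (hε : 0 < ε) :
    ∃ w : E.dom, E.inhomNorm θ q (x - w) < ENNReal.ofReal ε := by
  have hnorm : Tendsto (fun t => ENNReal.ofReal ‖x - E.S t x‖) (𝓝[>] 0) (𝓝 0) := by
    simpa using ENNReal.tendsto_ofReal
      ((tendsto_const_nhds (x := x)).sub (E.tendsto_S_nhdsGT x)).norm
  have h := hnorm.add (E.tendsto_homNormX_sub_S hq hx)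
  rw [add_zero] at h
  obtain ⟨t, hlt, ht⟩ :=
    ((h.eventually_lt_const (ENNReal.ofReal_pos.2 hε)).and self_mem_nhdsWithin).exists
  exact ⟨⟨E.S t x, E.S_smoothing t ht x⟩, hlt⟩

end Semigroup

section HomogeneousOperator

theorem norm_Aop_le (x : E.dom) : ‖E.Aop x‖ ≤ E.C₁⁻¹ * ‖E.jY x‖ := by
  rw [inv_mul_eq_div, le_div_iff₀ E.C₁_pos, mul_comm]
  exact E.normY_lower x

theorem exists_tendsto_Aop {y : Y} (hy : y ∈ E.DdotA) :
    ∃ L : X, ∃ u : ℕ → E.dom, Tendsto (fun n => E.jY (u n)) atTop (𝓝 y) ∧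
      Tendsto (fun n => E.Aop (u n)) atTop (𝓝 L) := by
  obtain ⟨u, hu⟩ := hy
  have hcauchy : CauchySeq fun n => E.Aop (u n) := by
    have hY := Metric.cauchySeq_iff.1 hu.cauchySeq
    refine Metric.cauchySeq_iff.2 fun δ hδ => ?_
    obtain ⟨N, hN⟩ := hY (E.C₁ * δ) (mul_pos E.C₁_pos hδ)
    refine ⟨N, fun m hm n hn => ?_⟩
    have hmn := hN m hm n hn
    rw [dist_eq_norm, ← map_sub] at hmn ⊢
    calc ‖E.Aop (u m - u n)‖ ≤ E.C₁⁻¹ * ‖E.jY (u m - u n)‖ := E.norm_Aop_le _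
      _ < E.C₁⁻¹ * (E.C₁ * δ) := mul_lt_mul_of_pos_left hmn (inv_pos.2 E.C₁_pos)
      _ = δ := by field_simp [E.C₁_pos.ne']
  obtain ⟨L, hL⟩ := cauchySeq_tendsto_of_complete hcauchy
  exact ⟨L, u, hu, hL⟩

theorem tendsto_Aop_of_tendsto_jY {y : Y} (hy : y ∈ E.DdotA) {u : ℕ → E.dom}
    (hu : Tendsto (fun n => E.jY (u n)) atTop (𝓝 y)) :
    Tendsto (fun n => E.Aop (u n)) atTop (𝓝 (E.Adot y)) := by
  obtain ⟨v, hv, hAv⟩ := Classical.epsilon_spec_aux ⟨0⟩ _ (E.exists_tendsto_Aop hy)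
  have hdiff : Tendsto (fun n => E.Aop (u n) - E.Aop (v n)) atTop (𝓝 0) := by
    have hY : Tendsto (fun n => E.C₁⁻¹ * ‖E.jY (u n) - E.jY (v n)‖) atTop (𝓝 0) := by
      simpa using ((hu.sub hv).norm).const_mul E.C₁⁻¹
    refine squeeze_zero_norm (fun n => ?_) hY
    rw [← map_sub, ← map_sub]
    exact E.norm_Aop_le _
  simpa [Adot] using hdiff.add hAv

theorem jY_mem_DdotA (w : E.dom) : E.jY w ∈ E.DdotA := ⟨fun _ => w, tendsto_const_nhds⟩

theorem Adot_jY (w : E.dom) : E.Adot (E.jY w) = E.Aop w :=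
  tendsto_nhds_unique (E.tendsto_Aop_of_tendsto_jY (E.jY_mem_DdotA w) tendsto_const_nhds)
    tendsto_const_nhds

theorem sub_mem_DdotA {y₁ y₂ : Y} (h₁ : y₁ ∈ E.DdotA) (h₂ : y₂ ∈ E.DdotA) :
    y₁ - y₂ ∈ E.DdotA := by
  obtain ⟨u, hu⟩ := h₁
  obtain ⟨v, hv⟩ := h₂
  exact ⟨u - v, by simpa using hu.sub hv⟩

theorem Adot_sub {y₁ y₂ : Y} (h₁ : y₁ ∈ E.DdotA) (h₂ : y₂ ∈ E.DdotA) :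
    E.Adot (y₁ - y₂) = E.Adot y₁ - E.Adot y₂ := by
  obtain ⟨u, hu⟩ := h₁
  obtain ⟨v, hv⟩ := h₂
  have huv : Tendsto (fun n => E.jY ((u - v) n)) atTop (𝓝 (y₁ - y₂)) := by
    simpa using hu.sub hv
  refine tendsto_nhds_unique (E.tendsto_Aop_of_tendsto_jY (E.sub_mem_DdotA ⟨u, hu⟩ ⟨v, hv⟩) huv) ?_
  simpa using
    (E.tendsto_Aop_of_tendsto_jY ⟨u, hu⟩ hu).sub (E.tendsto_Aop_of_tendsto_jY ⟨v, hv⟩ hv)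

end HomogeneousOperator

section KFunctional

theorem Kfun_le (t : ℝ) {z : Z} {x : X} {y : Y} (hy : y ∈ E.DdotA) (hz : E.ιX x + E.ιY y = z) :
    E.Kfun t z ≤ ENNReal.ofReal (‖x‖ + t * ‖E.Adot y‖) :=
  iInf_le_of_le x <| iInf_le_of_le y <| iInf_le_of_le hy <| iInf_le_of_le hz le_rfl

theorem exists_decomp_of_Kfun_lt {t : ℝ} {z : Z} {c : ℝ} (h : E.Kfun t z < ENNReal.ofReal c) :
    ∃ x y, y ∈ E.DdotA ∧ E.ιX x + E.ιY y = z ∧ ‖x‖ + t * ‖E.Adot y‖ < c := by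
  simp only [Kfun, iInf_lt_iff] at h
  obtain ⟨x, y, hy, hz, hlt⟩ := h
  exact ⟨x, y, hy, hz, (ENNReal.ofReal_lt_ofReal_iff'.1 hlt).1⟩

theorem monotone_Kfun (z : Z) : Monotone fun t => E.Kfun t z :=
  fun _ _ hab => iInf_mono fun _ => iInf_mono fun _ => iInf_mono fun _ => iInf_mono fun _ =>
    ENNReal.ofReal_le_ofReal (by gcongr)

theorem Kfun_sub_ιX_le (t : ℝ) (x₀ : X) (z : Z) :
    E.Kfun t (z - E.ιX x₀) ≤ E.Kfun t z + ENNReal.ofReal ‖x₀‖ := by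
  conv_rhs => rw [Kfun]; simp only [ENNReal.iInf_add]
  refine le_iInf fun x => le_iInf₂ fun y hy => le_iInf fun hz =>
    (E.Kfun_le t (x := x - x₀) hy ?_).trans ?_
  · rw [map_sub, ← hz]
    abel
  · refine (ENNReal.ofReal_le_ofReal ?_).trans ENNReal.ofReal_add_le
    linarith [norm_sub_le x x₀]

theorem Kfun_sub_ιY_le {t : ℝ} (ht : 0 ≤ t) {y₀ : Y} (hy₀ : y₀ ∈ E.DdotA) (z : Z) :
    E.Kfun t (z - E.ιY y₀) ≤ E.Kfun t z + ENNReal.ofReal (t * ‖E.Adot y₀‖) := by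
  conv_rhs => rw [Kfun]; simp only [ENNReal.iInf_add]
  refine le_iInf fun x => le_iInf₂ fun y hy => le_iInf fun hz =>
    (E.Kfun_le t (x := x) (E.sub_mem_DdotA hy hy₀) ?_).trans ?_
  · rw [map_sub, ← hz]
    abel
  · rw [E.Adot_sub hy hy₀]
    refine (ENNReal.ofReal_le_ofReal ?_).trans ENNReal.ofReal_add_le
    nlinarith [norm_sub_le (E.Adot y) (E.Adot y₀)]

theorem Kfun_sub_ιX_dom_le {t : ℝ} (ht : 0 ≤ t) (w : E.dom) (z : Z) :
    E.Kfun t (z - E.ιX w) ≤ E.Kfun t z + ENNReal.ofReal (t * ‖E.Aop w‖) := by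
  simpa [E.j_compat, E.Adot_jY] using E.Kfun_sub_ιY_le ht (E.jY_mem_DdotA w) z

end KFunctional

section Approximation

def weightedKfun (θ : ℝ) (z : Z) (t : ℝ) : ℝ≥0∞ := ENNReal.ofReal (t ^ (-θ)) * E.Kfun t z

def IsDecompAt (θ η c : ℝ) (z : Z) (x : X) (y : Y) : Prop :=
  y ∈ E.DdotA ∧ E.ιX x + E.ιY y = z ∧ ‖x‖ + c * ‖E.Adot y‖ ≤ η * c ^ θ

variable {E}

theorem interpNorm_eq_eLpNorm {θ : ℝ} {q : ℝ≥0∞} (hq0 : q ≠ 0) (z : Z) :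
    E.interpNorm θ q z = eLpNorm (E.weightedKfun θ z) q haarScale := by
  rcases eq_or_ne q ⊤ with rfl | hq
  · simp [interpNorm, lqNorm, weightedKfun, eLpNorm_exponent_top, eLpNormEssSup]
  · simp [interpNorm, lqNorm, weightedKfun, hq, eLpNorm_eq_lintegral_rpow_enorm_toReal hq0]

theorem measurable_weightedKfun (θ : ℝ) (z : Z) : Measurable (E.weightedKfun θ z) :=
  (by fun_prop : Measurable fun t : ℝ => ENNReal.ofReal (t ^ (-θ))).mul
    (E.monotone_Kfun z).measurable

theorem exists_isDecompAt {θ η c : ℝ} (hc : 0 < c) {z : Z}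
    (h : E.weightedKfun θ z c < ENNReal.ofReal η) : ∃ x y, E.IsDecompAt θ η c z x y := by
  have hK : E.Kfun c z < ENNReal.ofReal (η * c ^ θ) := by
    by_contra! hle
    refine h.not_ge ?_
    calc ENNReal.ofReal η = ENNReal.ofReal (c ^ (-θ)) * ENNReal.ofReal (η * c ^ θ) := by
          rw [← ENNReal.ofReal_mul (by positivity), mul_left_comm, ← Real.rpow_add hc,
            neg_add_cancel, Real.rpow_zero, mul_one]
      _ ≤ E.weightedKfun θ z c := mul_le_mul_right hle _
  obtain ⟨x, y, hy, hz, hlt⟩ := E.exists_decomp_of_Kfun_lt hK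
  exact ⟨x, y, hy, hz, hlt.le⟩

namespace IsDecompAt

variable {θ η c r : ℝ} {z : Z} {x : X} {y : Y}

theorem rpow_neg_mul_norm_le (h : E.IsDecompAt θ η c z x y) (hc : 0 < c) (hr : 0 < r) :
    r ^ (-θ) * ‖x‖ ≤ η * (c / r) ^ θ := by
  have hx : ‖x‖ ≤ η * c ^ θ := by nlinarith [h.2.2, norm_nonneg (E.Adot y)]
  calc r ^ (-θ) * ‖x‖ ≤ r ^ (-θ) * (η * c ^ θ) := by gcongr
    _ = η * (c / r) ^ θ := by
      rw [Real.div_rpow hc.le hr.le, Real.rpow_neg hr.le]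
      ring

theorem rpow_neg_mul_mul_norm_Adot_le (h : E.IsDecompAt θ η c z x y) (hc : 0 < c)
    (hr : 0 < r) : r ^ (-θ) * (r * ‖E.Adot y‖) ≤ η * (r / c) ^ (1 - θ) := by
  have hy : c * ‖E.Adot y‖ ≤ η * c ^ θ := by nlinarith [h.2.2, norm_nonneg x]
  have hcθ : 0 < c ^ θ := by positivity
  calc r ^ (-θ) * (r * ‖E.Adot y‖) = (r / c) ^ (1 - θ) * ((c ^ θ)⁻¹ * (c * ‖E.Adot y‖)) := by
        rw [Real.div_rpow hr.le hc.le, Real.rpow_sub hr, Real.rpow_sub hc, Real.rpow_one,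
          Real.rpow_one, Real.rpow_neg hr.le]
        field_simp
    _ ≤ (r / c) ^ (1 - θ) * ((c ^ θ)⁻¹ * (η * c ^ θ)) := by gcongr
    _ = η * (r / c) ^ (1 - θ) := by field_simp

end IsDecompAt

variable {θ η s t : ℝ} {z : Z} {xs xt : X} {ys yt : Y}

theorem sub_mem_dom_of_add_eq (hys : ys ∈ E.DdotA) (hyt : yt ∈ E.DdotA)
    (h : E.ιX xs + E.ιY ys = E.ιX xt + E.ιY yt) : xt - xs ∈ E.dom := by
  refine E.inter_sub _ _ (E.sub_mem_DdotA hys hyt) ?_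
  rw [map_sub, map_sub, sub_eq_sub_iff_add_eq_add, ← h, add_comm]

theorem Aop_sub_of_add_eq (hys : ys ∈ E.DdotA) (hyt : yt ∈ E.DdotA)
    (h : E.ιX xs + E.ιY ys = E.ιX xt + E.ιY yt) :
    E.Aop ⟨xt - xs, sub_mem_dom_of_add_eq hys hyt h⟩ = E.Adot ys - E.Adot yt := by
  have hj : E.jY ⟨xt - xs, sub_mem_dom_of_add_eq hys hyt h⟩ = ys - yt := E.ιY_inj <| by
    rw [← E.j_compat, map_sub, map_sub, sub_eq_sub_iff_add_eq_add, ← h, add_comm]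
  rw [← E.Adot_jY, hj, E.Adot_sub hys hyt]

theorem weightedKfun_sub_le_small (hs0 : 0 < s) (ht0 : 0 < t)
    (hs : E.IsDecompAt θ η s z xs ys) (ht : E.IsDecompAt θ η t z xt yt) {r : ℝ} (hr : 0 < r) :
    E.weightedKfun θ (z - E.ιX (xt - xs)) r
      ≤ E.weightedKfun θ z r + ENNReal.ofReal (η * ((r / s) ^ (1 - θ) + (r / t) ^ (1 - θ))) := by
  have hz := hs.2.1.trans ht.2.1.symm
  set w : E.dom := ⟨xt - xs, sub_mem_dom_of_add_eq hs.1 ht.1 hz⟩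
  have hAw :
      r ^ (-θ) * (r * ‖E.Aop w‖) ≤ η * ((r / s) ^ (1 - θ) + (r / t) ^ (1 - θ)) := by
    rw [Aop_sub_of_add_eq hs.1 ht.1 hz]
    calc r ^ (-θ) * (r * ‖E.Adot ys - E.Adot yt‖)
        ≤ r ^ (-θ) * (r * ‖E.Adot ys‖) + r ^ (-θ) * (r * ‖E.Adot yt‖) := by
          rw [← mul_add, ← mul_add]
          gcongr
          exact norm_sub_le _ _
      _ ≤ η * (r / s) ^ (1 - θ) + η * (r / t) ^ (1 - θ) :=
          add_le_add (hs.rpow_neg_mul_mul_norm_Adot_le hs0 hr)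
            (ht.rpow_neg_mul_mul_norm_Adot_le ht0 hr)
      _ = _ := (mul_add _ _ _).symm
  calc E.weightedKfun θ (z - E.ιX (xt - xs)) r
      ≤ ENNReal.ofReal (r ^ (-θ)) * (E.Kfun r z + ENNReal.ofReal (r * ‖E.Aop w‖)) :=
        mul_le_mul_right (E.Kfun_sub_ιX_dom_le hr.le w z) _
    _ = E.weightedKfun θ z r + ENNReal.ofReal (r ^ (-θ) * (r * ‖E.Aop w‖)) := by
        rw [mul_add, weightedKfun, ← ENNReal.ofReal_mul (by positivity)]
    _ ≤ _ := by gcongr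

theorem weightedKfun_sub_le_medium (hs0 : 0 < s) (ht0 : 0 < t)
    (hs : E.IsDecompAt θ η s z xs ys) (ht : E.IsDecompAt θ η t z xt yt) {r : ℝ} (hr : 0 < r) :
    E.weightedKfun θ (z - E.ιX (xt - xs)) r
      ≤ ENNReal.ofReal (η * ((s / r) ^ θ + (r / t) ^ (1 - θ))) := by
  have hz : E.ιX xs + E.ιY yt = z - E.ιX (xt - xs) := by
    rw [map_sub, ← ht.2.1]
    abel
  calc E.weightedKfun θ (z - E.ιX (xt - xs)) r
      ≤ ENNReal.ofReal (r ^ (-θ)) * ENNReal.ofReal (‖xs‖ + r * ‖E.Adot yt‖) :=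
        mul_le_mul_right (E.Kfun_le r ht.1 hz) _
    _ = ENNReal.ofReal (r ^ (-θ) * ‖xs‖ + r ^ (-θ) * (r * ‖E.Adot yt‖)) := by
        rw [← ENNReal.ofReal_mul (by positivity), mul_add]
    _ ≤ _ := by
        rw [mul_add]
        exact ENNReal.ofReal_le_ofReal (add_le_add (hs.rpow_neg_mul_norm_le hs0 hr)
          (ht.rpow_neg_mul_mul_norm_Adot_le ht0 hr))

theorem weightedKfun_sub_le_large (hs0 : 0 < s) (ht0 : 0 < t)
    (hs : E.IsDecompAt θ η s z xs ys) (ht : E.IsDecompAt θ η t z xt yt) {r : ℝ} (hr : 0 < r) :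
    E.weightedKfun θ (z - E.ιX (xt - xs)) r
      ≤ E.weightedKfun θ z r + ENNReal.ofReal (η * ((s / r) ^ θ + (t / r) ^ θ)) := by
  have hxw : r ^ (-θ) * ‖xt - xs‖ ≤ η * ((s / r) ^ θ + (t / r) ^ θ) := by
    calc r ^ (-θ) * ‖xt - xs‖ ≤ r ^ (-θ) * ‖xs‖ + r ^ (-θ) * ‖xt‖ := by
          rw [← mul_add]
          gcongr
          exact (norm_sub_le _ _).trans_eq (add_comm _ _)
      _ ≤ η * (s / r) ^ θ + η * (t / r) ^ θ :=
          add_le_add (hs.rpow_neg_mul_norm_le hs0 hr) (ht.rpow_neg_mul_norm_le ht0 hr)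
      _ = _ := (mul_add _ _ _).symm
  calc E.weightedKfun θ (z - E.ιX (xt - xs)) r
      ≤ ENNReal.ofReal (r ^ (-θ)) * (E.Kfun r z + ENNReal.ofReal ‖xt - xs‖) :=
        mul_le_mul_right (E.Kfun_sub_ιX_le r _ z) _
    _ = E.weightedKfun θ z r + ENNReal.ofReal (r ^ (-θ) * ‖xt - xs‖) := by
        rw [mul_add, weightedKfun, ← ENNReal.ofReal_mul (by positivity)]
    _ ≤ _ := by gcongr

theorem weightedKfun_sub_le (hs0 : 0 < s) (hst : s ≤ t) (hs : E.IsDecompAt θ η s z xs ys)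
    (ht : E.IsDecompAt θ η t z xt yt) {r : ℝ} (hr : 0 < r) :
    E.weightedKfun θ (z - E.ιX (xt - xs)) r
      ≤ (Ioc 0 s).indicator (E.weightedKfun θ z) r + (Ioi t).indicator (E.weightedKfun θ z) r
        + ENNReal.ofReal η * (powerPeak (1 - θ) θ s r + powerPeak (1 - θ) θ t r) := by
  have ht0 := hs0.trans_le hst
  have hsplit : ∀ {a b : ℝ}, 0 ≤ a → 0 ≤ b → ENNReal.ofReal (η * (a + b))
      = ENNReal.ofReal η * (ENNReal.ofReal a + ENNReal.ofReal b) := fun ha hb => by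
    rw [ENNReal.ofReal_mul' (add_nonneg ha hb), ENNReal.ofReal_add ha hb]
  simp only [powerPeak]
  rcases le_or_gt r s with hrs | hsr
  · rw [indicator_of_mem (show r ∈ Ioc 0 s from ⟨hr, hrs⟩),
      indicator_of_notMem (notMem_Ioi.2 (hrs.trans hst)), add_zero, if_pos hrs,
      if_pos (hrs.trans hst), ← hsplit (by positivity) (by positivity)]
    exact E.weightedKfun_sub_le_small hs0 ht0 hs ht hr
  rcases le_or_gt r t with hrt | htr
  · rw [indicator_of_notMem (fun h => hsr.not_ge h.2), indicator_of_notMem (notMem_Ioi.2 hrt),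
      zero_add, zero_add, if_neg hsr.not_ge, if_pos hrt, ← hsplit (by positivity) (by positivity)]
    exact E.weightedKfun_sub_le_medium hs0 ht0 hs ht hr
  · rw [indicator_of_notMem (fun h => (hst.trans_lt htr).not_ge h.2),
      indicator_of_mem (show r ∈ Ioi t from htr), zero_add, if_neg (hst.trans_lt htr).not_ge,
      if_neg htr.not_ge, ← hsplit (by positivity) (by positivity)]
    exact E.weightedKfun_sub_le_large hs0 ht0 hs ht hr

theorem interpNorm_sub_le {q : ℝ≥0∞} (hq : 1 ≤ q) (hs0 : 0 < s) (hst : s ≤ t)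
    (hs : E.IsDecompAt θ η s z xs ys) (ht : E.IsDecompAt θ η t z xt yt) :
    E.interpNorm θ q (z - E.ιX (xt - xs))
      ≤ eLpNorm ((Ioc 0 s).indicator (E.weightedKfun θ z)) q haarScale
        + eLpNorm ((Ioi t).indicator (E.weightedKfun θ z)) q haarScale
        + ENNReal.ofReal η * (eLpNorm (powerPeak (1 - θ) θ s) q haarScale
          + eLpNorm (powerPeak (1 - θ) θ t) q haarScale) := by
  have hF := (E.measurable_weightedKfun θ z).aestronglyMeasurable (μ := haarScale)
  have hP : ∀ c, Measurable (powerPeak (1 - θ) θ c) := fun c => measurable_powerPeak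
  rw [interpNorm_eq_eLpNorm (zero_lt_one.trans_le hq).ne']
  calc eLpNorm (E.weightedKfun θ (z - E.ιX (xt - xs))) q haarScale
      ≤ eLpNorm ((Ioc 0 s).indicator (E.weightedKfun θ z) + (Ioi t).indicator (E.weightedKfun θ z)
          + fun r => ENNReal.ofReal η * (powerPeak (1 - θ) θ s + powerPeak (1 - θ) θ t) r)
          q haarScale := by
        refine eLpNorm_mono_enorm_ae ?_
        filter_upwards [ae_pos_haarScale] with r hr
        exact E.weightedKfun_sub_le hs0 hst hs ht hr
    _ ≤ _ := by
        refine (eLpNorm_add_le ((hF.indicator measurableSet_Ioc).add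
          (hF.indicator measurableSet_Ioi))
          (measurable_const.mul ((hP s).add (hP t))).aestronglyMeasurable hq).trans ?_
        gcongr
        · exact eLpNorm_add_le (hF.indicator measurableSet_Ioc) (hF.indicator measurableSet_Ioi) hq
        · refine (eLpNorm_le_mul_eLpNorm_of_ae_le_mul'' q
            ((hP s).add (hP t)).aestronglyMeasurable (.of_forall fun r => le_rfl)).trans ?_
          gcongr
          exact eLpNorm_add_le (hP s).aestronglyMeasurable (hP t).aestronglyMeasurable hq

theorem memLp_weightedKfun {θ : ℝ} {q : ℝ≥0∞} (hq0 : q ≠ 0) {z : Z}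
    (hz : E.interpNorm θ q z < ⊤) : MemLp (E.weightedKfun θ z) q haarScale :=
  ⟨(E.measurable_weightedKfun θ z).aestronglyMeasurable, by rwa [← interpNorm_eq_eLpNorm hq0]⟩

theorem exists_isDecompAt_of_measure_eq_top {q : ℝ≥0∞} (hq0 : q ≠ 0) (hq : q ≠ ⊤)
    (hη : 0 < η) (hz : E.interpNorm θ q z < ⊤) {A : Set ℝ} (hA0 : A ⊆ Ioi 0)
    (hA : haarScale A = ⊤) : ∃ c ∈ A, ∃ x y, E.IsDecompAt θ η c z x y := by
  obtain ⟨c, hc, hlt⟩ := (memLp_weightedKfun hq0 hz).exists_enorm_lt_of_measure_eq_top hq0 hq hA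
    (ENNReal.ofReal_pos.2 hη).ne'
  exact ⟨c, hc, exists_isDecompAt (hA0 hc) hlt⟩

theorem exists_dom_interpNorm_sub_lt {q : ℝ≥0∞} (hq1 : 1 ≤ q) (hq : q ≠ ⊤) (hθ0 : 0 < θ)
    (hθ1 : θ < 1) (hz : E.interpNorm θ q z < ⊤) {ε : ℝ} (hε : 0 < ε) :
    ∃ w : E.dom, E.interpNorm θ q (z - E.ιX w) < ENNReal.ofReal ε := by
  have hq0 : q ≠ 0 := (zero_lt_one.trans_le hq1).ne'
  set F := E.weightedKfun θ z
  have hF := memLp_weightedKfun hq0 hz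
  set δ := ENNReal.ofReal (ε / 3)
  have hδ : 0 < δ := ENNReal.ofReal_pos.2 (by positivity)
  set C := (ENNReal.ofReal (1 / ((1 - θ) * q.toReal)) + ENNReal.ofReal (1 / (θ * q.toReal)))
    ^ (1 / q.toReal)
  have hC : ∀ c, 0 < c → eLpNorm (powerPeak (1 - θ) θ c) q haarScale = C :=
    fun c hc => eLpNorm_powerPeak (by linarith) hθ0 hc hq0 hq
  obtain ⟨η, hη, hηC⟩ := ENNReal.exists_nnreal_pos_mul_lt (by finiteness : C + C ≠ ⊤) hδ.ne'
  obtain ⟨s₀, hs₀, hs₀0⟩ := (((tendsto_eLpNorm_indicator_Ioc_nhdsGT hq hF).eventually_lt_const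
    hδ).and self_mem_nhdsWithin).exists
  obtain ⟨t₀, ht₀⟩ :=
    ((tendsto_eLpNorm_indicator_Ioi_atTop hq hF).eventually_lt_const hδ).exists
  obtain ⟨s, hsI, xs, ys, hs⟩ := exists_isDecompAt_of_measure_eq_top hq0 hq
    (NNReal.coe_pos.2 hη) hz (fun _ hr => hr.1) (haarScale_Ioc_eq_top hs₀0)
  have hm : 0 < max t₀ s := lt_max_of_lt_right hsI.1
  obtain ⟨t, htI, xt, yt, ht⟩ := exists_isDecompAt_of_measure_eq_top hq0 hq
    (NNReal.coe_pos.2 hη) hz (Ioi_subset_Ioi hm.le) (haarScale_Ioi_eq_top hm)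
  have hst : s ≤ t := (le_max_right _ _).trans htI.le
  refine ⟨⟨xt - xs, sub_mem_dom_of_add_eq hs.1 ht.1 (hs.2.1.trans ht.2.1.symm)⟩, ?_⟩
  calc E.interpNorm θ q (z - E.ιX (xt - xs))
      ≤ eLpNorm ((Ioc 0 s).indicator F) q haarScale + eLpNorm ((Ioi t).indicator F) q haarScale
        + η * (C + C) := by
        simpa [hC s hsI.1, hC t (hm.trans htI)] using interpNorm_sub_le hq1 hsI.1 hst hs ht
    _ < δ + δ + δ := by
        gcongr
        · exact (eLpNorm_mono_enorm fun r => enorm_indicator_le_of_subset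
            (Ioc_subset_Ioc_right hsI.2) F r).trans_lt hs₀
        · exact (eLpNorm_mono_enorm fun r => enorm_indicator_le_of_subset
            (Ioi_subset_Ioi ((le_max_left _ _).trans htI.le)) F r).trans_lt ht₀
    _ = ENNReal.ofReal ε := by
        rw [← ENNReal.ofReal_add (by positivity) (by positivity),
          ← ENNReal.ofReal_add (by positivity) (by positivity)]
        ring_nf

end Approximation

end

/-- for `1 ≤ q < ∞` and `θ ∈ (0,1)`, the domain `D(A)` is dense in
`D_A(θ,q)` and dense in the real interpolation space `(X, D(Ȧ))_{θ,q}`. -/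
theorem domain_dense_in_intermediate_spaces
    {X Y Z : Type*} [NormedAddCommGroup X] [NormedSpace ℂ X] [CompleteSpace X]
    [NormedAddCommGroup Y] [NormedSpace ℂ Y]
    [AddCommGroup Z] [Module ℂ Z] [TopologicalSpace Z] [T2Space Z]
    (E : DPG X Y Z) :
    ∀ q : ℝ≥0∞, 1 ≤ q → q ≠ ⊤ → ∀ θ : ℝ, 0 < θ → θ < 1 →
      (∀ x : X, E.memDA θ q x → ∀ ε : ℝ, 0 < ε → ∃ w : E.dom,
        E.inhomNorm θ q (x - (w : X)) < ENNReal.ofReal ε) ∧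
      (∀ z : Z, z ∈ E.sumSpace → E.interpNorm θ q z < ⊤ → ∀ ε : ℝ, 0 < ε → ∃ w : E.dom,
        E.interpNorm θ q (z - E.ιX (w : X)) < ENNReal.ofReal ε) := by
  intro q hq1 hq θ hθ0 hθ1
  exact ⟨fun x hx ε hε => E.exists_dom_inhomNorm_sub_lt hq hx hε,
    fun z _ hz ε hε => exists_dom_interpNorm_sub_lt hq1 hq hθ0 hθ1 hz hε⟩

end DPG
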